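/- arXiv:math/0211193 — 4 statements merged into one kernel-verified Lean document; each statement's English description precedes it below -/
import Mathlib

section
/- Let F_q be a finite field of odd order. Then the scalar matrix -I₂ is a commutator in SL(2, F_q): there exist A, B ∈ SL(2, F_q) with A B A⁻¹ B⁻¹ = -I₂. -/
/-- In `SL(2, F_q)` with `q` odd, `-I₂` is a commutator. -/
theorem neg_one_is_commutator_SL2
    (F : Type*) [Field F] [Fintype F] (hq : Odd (Fintype.card F)) :
    ∃ A B : Matrix.SpecialLinearGroup (Fin 2) F,
      ((A * B * A⁻¹ * B⁻¹ : Matrix.SpecialLinearGroup (Fin 2) F) : Matrix (Fin 2) (Fin 2) F)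
        = -(1 : Matrix (Fin 2) (Fin 2) F) := by
  -- Find x y : F with x^2 + y^2 = -1, by lifting from the prime field.
  obtain ⟨p, hp⟩ := CharP.exists F
  haveI := hp
  haveI hpp : Fact p.Prime := ⟨CharP.char_is_prime F p⟩
  have hp2 : p ≠ 2 := by
    rintro rfl
    have h2 : ringChar F = 2 := ringChar.eq F 2
    have hm := FiniteField.even_card_of_char_two h2
    obtain ⟨k, hk⟩ := hq
    omega
  obtain ⟨a, b, hab⟩ := ZMod.sq_add_sq p (-1 : ZMod p)
  set f : ZMod p →+* F := ZMod.castHom dvd_rfl F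
  set x : F := f a
  set y : F := f b
  have hxy : x ^ 2 + y ^ 2 = -1 := by
    have : f (a ^ 2 + b ^ 2) = f (-1) := by rw [hab]
    simpa [x, y] using this
  set M : Matrix (Fin 2) (Fin 2) F := !![x, y; y, -x] with hM
  set N : Matrix (Fin 2) (Fin 2) F := !![y, -x; -x, -y] with hN
  have hdetA : M.det = 1 := by
    rw [hM, Matrix.det_fin_two_of]; linear_combination -hxy
  have hdetB : N.det = 1 := by
    rw [hN, Matrix.det_fin_two_of]; linear_combination -hxy
  have hdetA' : (-M).det = 1 := by
    rw [hM]; show Matrix.det !![-x, -y; -y, -(-x)] = 1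
    rw [Matrix.det_fin_two_of]; linear_combination -hxy
  have hdetB' : (-N).det = 1 := by
    rw [hN]; show Matrix.det !![-y, -(-x); -(-x), -(-y)] = 1
    rw [Matrix.det_fin_two_of]; linear_combination -hxy
  have hM2 : M * M = -1 := by
    ext i j
    fin_cases i <;> fin_cases j <;>
      simp [hM, Matrix.mul_apply, Fin.sum_univ_succ, Matrix.one_apply] <;>
      first | ring1 | linear_combination hxy
  have hN2 : N * N = -1 := by
    ext i j
    fin_cases i <;> fin_cases j <;>
      simp [hN, Matrix.mul_apply, Fin.sum_univ_succ, Matrix.one_apply] <;>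
      first | ring1 | linear_combination hxy
  have hNM : N * M = -(M * N) := by
    ext i j
    fin_cases i <;> fin_cases j <;>
      simp [hM, hN, Matrix.mul_apply, Fin.sum_univ_succ]
  set A : Matrix.SpecialLinearGroup (Fin 2) F := ⟨M, hdetA⟩ with hA
  set B : Matrix.SpecialLinearGroup (Fin 2) F := ⟨N, hdetB⟩ with hB
  refine ⟨A, B, ?_⟩
  have hAinv : A⁻¹ = (⟨-M, hdetA'⟩ : Matrix.SpecialLinearGroup (Fin 2) F) := by
    apply inv_eq_of_mul_eq_one_right
    apply Subtype.ext
    show M * (-M) = (1 : Matrix (Fin 2) (Fin 2) F)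
    rw [Matrix.mul_neg, hM2, neg_neg]
  have hBinv : B⁻¹ = (⟨-N, hdetB'⟩ : Matrix.SpecialLinearGroup (Fin 2) F) := by
    apply inv_eq_of_mul_eq_one_right
    apply Subtype.ext
    show N * (-N) = (1 : Matrix (Fin 2) (Fin 2) F)
    rw [Matrix.mul_neg, hN2, neg_neg]
  rw [hAinv, hBinv]
  have : ((A * B * ⟨-M, hdetA'⟩ * ⟨-N, hdetB'⟩ : Matrix.SpecialLinearGroup (Fin 2) F)
      : Matrix (Fin 2) (Fin 2) F) = M * N * (-M) * (-N) := by
    rfl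
  rw [this]
  show M * N * (-M) * (-N) = -1
  have e1 : M * N * (-M) * (-N) = M * (N * M) * N := by noncomm_ring
  rw [e1, hNM]
  have e2 : M * -(M * N) * N = -(M * M * (N * N)) := by noncomm_ring
  rw [e2, hM2, hN2]
  simp
end

section
/- Let V = F₄² viewed as a 4-dimensional F₂-vector space with F₄-structure, s ∈ F₄ a generator of F₄* (s³ = 1, s ≠ 1), and let λ : Λ²_{F₂} V → F₄ be the F₂-linear map induced by the F₄-bilinear wedge (i.e., λ factors the F₂-exterior square through the F₄-exterior square). Then the kernel S of λ is spanned over F₂ by elements of the form u ∧ su with u ∈ V; concretely, for a basis x, y of V over F₄, the four elements x∧sx, y∧sy, (x+y)∧s(x+y), (x+sy)∧s(x+sy) are linearly independent over F₂ and span S. -/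
noncomputable section StatementFifteen

/-- The field with four elements. -/
abbrev F4 : Type := GaloisField 2 2

/-- `V = F₄²`, a 2-dimensional `F₄`-vector space, viewed as a 4-dimensional
`F₂ = ℤ/2`-vector space. -/
abbrev V : Type := F4 × F4

/-- The `F₄`-bilinear wedge (determinant) form on `V = F₄²`, recorded as a
`ℤ/2`-bilinear map (it identifies `V ∧_{F₄} V` with `F₄`). -/
def wedgeBilin : V →ₗ[ZMod 2] V →ₗ[ZMod 2] F4 :=
  LinearMap.mk₂ (ZMod 2) (fun u v => u.1 * v.2 - u.2 * v.1)
    (by intro u u' v; simp; ring)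
    (by intro c u v; simp [smul_sub, smul_mul_assoc])
    (by intro u v v'; simp; ring)
    (by intro c u v; simp [smul_sub, mul_smul_comm])

/-- The wedge as a `ℤ/2`-alternating map on `V`. -/
def wedgeAlt : V [⋀^Fin 2]→ₗ[ZMod 2] F4 where
  toFun v := wedgeBilin (v 0) (v 1)
  map_update_add' := by
    intro _ m i x y
    fin_cases i <;> simp [Function.update_apply]
  map_update_smul' := by
    intro _ m i c x
    fin_cases i <;> simp [Function.update_apply]
  map_eq_zero_of_eq' := by
    intro v i j hv hij
    fin_cases i <;> fin_cases j <;> simp_all [wedgeBilin] <;> ring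

/-- The `ℤ/2`-linear map `λ : Λ²_{F₂} V → F₄` induced by the `F₄`-bilinear
wedge, i.e. factoring the `F₂`-exterior square through the `F₄`-exterior
square `V ∧_{F₄} V ≅ F₄`. -/
def lam : (⋀[ZMod 2]^2 V) →ₗ[ZMod 2] F4 :=
  (ExteriorAlgebra.liftAlternating
      (fun i => match i with | 2 => wedgeAlt | _ => 0)) ∘ₗ
    (⋀[ZMod 2]^2 V).subtype

/-- The wedge `u ∧ v` of two vectors, as an element of `Λ²_{F₂} V`. -/
def w (u v : V) : ⋀[ZMod 2]^2 V :=
  ⟨ExteriorAlgebra.ιMulti (ZMod 2) 2 ![u, v],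
    ExteriorAlgebra.ιMulti_range (ZMod 2) 2 ⟨![u, v], rfl⟩⟩


/-! ### Auxiliary lemmas -/

theorem twoF4 : (2 : F4) = 0 := by
  exact_mod_cast CharP.cast_eq_zero F4 2

theorem decompF4 (s : F4) (h : s ≠ 0) (h1 : s ≠ 1) (a : F4) :
    ∃ α β : ZMod 2, a = α • (1:F4) + β • s := by
  have hli : LinearIndependent (ZMod 2) ![(1:F4), s] := by
    rw [linearIndependent_fin2]
    refine ⟨h, fun c => ?_⟩
    rcases (by decide : ∀ c : ZMod 2, c = 0 ∨ c = 1) c with rfl | rfl <;> simp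
    exact fun hc => h1 hc
  have hfr : Module.finrank (ZMod 2) F4 = 2 := GaloisField.finrank 2 (by norm_num)
  have hcard : Fintype.card (Fin 2) = Module.finrank (ZMod 2) F4 := by rw [hfr]; simp
  let B := basisOfLinearIndependentOfCardEqFinrank hli hcard
  have hB : ⇑B = ![(1:F4), s] := coe_basisOfLinearIndependentOfCardEqFinrank hli hcard
  have := B.sum_repr a
  rw [Fin.sum_univ_two, hB] at this
  exact ⟨B.repr a 0, B.repr a 1, by simpa using this.symm⟩

theorem addself {M : Type*} [AddCommMonoid M] [Module (ZMod 2) M] (z : M) : z + z = 0 := by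
  have h : z + z = (2 : ZMod 2) • z := by rw [two_smul]
  rw [h, show (2 : ZMod 2) = 0 by decide, zero_smul]

theorem upd0 (a b c : V) : Function.update ![a, b] 0 c = ![c, b] := by
  funext i
  fin_cases i <;> simp [Function.update_apply]

theorem upd1 (a b c : V) : Function.update ![a, b] 1 c = ![a, c] := by
  funext i
  fin_cases i <;> simp [Function.update_apply]

open ExteriorAlgebra in
theorem w_add_left (u u' v : V) : w (u + u') v = w u v + w u' v := by
  apply Subtype.ext
  show ιMulti (ZMod 2) 2 ![u + u', v] = ιMulti (ZMod 2) 2 ![u, v] + ιMulti (ZMod 2) 2 ![u', v]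
  rw [← upd0 u v (u + u'), ← upd0 u v u, ← upd0 u v u']
  exact (ιMulti (ZMod 2) 2).map_update_add ![u, v] 0 u u'

open ExteriorAlgebra in
theorem w_add_right (u v v' : V) : w u (v + v') = w u v + w u v' := by
  apply Subtype.ext
  show ιMulti (ZMod 2) 2 ![u, v + v'] = ιMulti (ZMod 2) 2 ![u, v] + ιMulti (ZMod 2) 2 ![u, v']
  rw [← upd1 u v (v + v'), ← upd1 u v v, ← upd1 u v v']
  exact (ιMulti (ZMod 2) 2).map_update_add ![u, v] 1 v v'

open ExteriorAlgebra in
theorem w_smul_left (c : ZMod 2) (u v : V) : w (c • u) v = c • w u v := by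
  apply Subtype.ext
  show ιMulti (ZMod 2) 2 ![c • u, v] = c • ιMulti (ZMod 2) 2 ![u, v]
  rw [← upd0 u v (c • u), ← upd0 u v u]
  exact (ιMulti (ZMod 2) 2).map_update_smul ![u, v] 0 c u

open ExteriorAlgebra in
theorem w_smul_right (c : ZMod 2) (u v : V) : w u (c • v) = c • w u v := by
  apply Subtype.ext
  show ιMulti (ZMod 2) 2 ![u, c • v] = c • ιMulti (ZMod 2) 2 ![u, v]
  rw [← upd1 u v (c • v), ← upd1 u v v]
  exact (ιMulti (ZMod 2) 2).map_update_smul ![u, v] 1 c v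

open ExteriorAlgebra in
theorem w_same (u : V) : w u u = 0 := by
  apply Subtype.ext
  show ιMulti (ZMod 2) 2 ![u, u] = 0
  exact (ιMulti (ZMod 2) 2).map_eq_zero_of_eq ![u, u] (i := 0) (j := 1) rfl (by decide)

theorem w_swap (u v : V) : w v u = w u v := by
  have h0 := w_same (u + v)
  rw [w_add_left, w_add_right, w_add_right, w_same, w_same, zero_add, add_zero] at h0
  have := congrArg (fun z => w u v + z) h0
  simpa [← add_assoc, addself] using this

/-! ### Functionals on the exterior square -/

def altOf (B : V →ₗ[ZMod 2] V →ₗ[ZMod 2] F4) (hB : ∀ u, B u u = 0) :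
    V [⋀^Fin 2]→ₗ[ZMod 2] F4 where
  toFun v := B (v 0) (v 1)
  map_update_add' := by
    intro _ m i x y
    fin_cases i <;> simp [Function.update_apply]
  map_update_smul' := by
    intro _ m i c x
    fin_cases i <;> simp [Function.update_apply]
  map_eq_zero_of_eq' := by
    intro v i j hv hij
    fin_cases i <;> fin_cases j
    · exact absurd rfl hij
    · have hv' : v 0 = v 1 := hv
      show B (v 0) (v 1) = 0
      rw [hv']; exact hB _
    · have hv' : v 1 = v 0 := hv
      show B (v 0) (v 1) = 0
      rw [hv']; exact hB _
    · exact absurd rfl hij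

def fl (B : V →ₗ[ZMod 2] V →ₗ[ZMod 2] F4) (hB : ∀ u, B u u = 0) :
    (⋀[ZMod 2]^2 V) →ₗ[ZMod 2] F4 :=
  (ExteriorAlgebra.liftAlternating
      (fun i => match i with | 2 => altOf B hB | _ => 0)) ∘ₗ
    (⋀[ZMod 2]^2 V).subtype

open ExteriorAlgebra in
theorem fl_w (B : V →ₗ[ZMod 2] V →ₗ[ZMod 2] F4) (hB : ∀ u, B u u = 0) (u v : V) :
    fl B hB (w u v) = B u v := by
  have h : fl B hB (w u v) = ExteriorAlgebra.liftAlternating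
      (fun i => match i with | 2 => altOf B hB | _ => 0) (ιMulti (ZMod 2) 2 ![u, v]) := rfl
  rw [h, liftAlternating_apply_ιMulti]
  rfl

open ExteriorAlgebra in
theorem lam_w (u v : V) : lam (w u v) = u.1 * v.2 - u.2 * v.1 := by
  have h : lam (w u v) = ExteriorAlgebra.liftAlternating
      (fun i => match i with | 2 => wedgeAlt | _ => 0) (ιMulti (ZMod 2) 2 ![u, v]) := rfl
  rw [h, liftAlternating_apply_ιMulti]
  rfl

def B1 : V →ₗ[ZMod 2] V →ₗ[ZMod 2] F4 :=
  LinearMap.mk₂ (ZMod 2) (fun u v => u.1 * v.1 * v.1 + u.1 * u.1 * v.1)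
    (by intro u u' v; simp only [Prod.fst_add]; linear_combination (u.1 * u'.1 * v.1) * twoF4)
    (by intro c u v; rcases (by decide : ∀ c : ZMod 2, c = 0 ∨ c = 1) c with rfl | rfl <;> simp)
    (by intro u v v'; simp only [Prod.fst_add]; linear_combination (u.1 * v.1 * v'.1) * twoF4)
    (by intro c u v; rcases (by decide : ∀ c : ZMod 2, c = 0 ∨ c = 1) c with rfl | rfl <;> simp)

def B2 : V →ₗ[ZMod 2] V →ₗ[ZMod 2] F4 :=
  LinearMap.mk₂ (ZMod 2) (fun u v => u.2 * v.2 * v.2 + u.2 * u.2 * v.2)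
    (by intro u u' v; simp only [Prod.snd_add]; linear_combination (u.2 * u'.2 * v.2) * twoF4)
    (by intro c u v; rcases (by decide : ∀ c : ZMod 2, c = 0 ∨ c = 1) c with rfl | rfl <;> simp)
    (by intro u v v'; simp only [Prod.snd_add]; linear_combination (u.2 * v.2 * v'.2) * twoF4)
    (by intro c u v; rcases (by decide : ∀ c : ZMod 2, c = 0 ∨ c = 1) c with rfl | rfl <;> simp)

def B3 : V →ₗ[ZMod 2] V →ₗ[ZMod 2] F4 :=
  LinearMap.mk₂ (ZMod 2) (fun u v => u.1 * v.2 * v.2 + v.1 * u.2 * u.2)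
    (by intro u u' v; simp only [Prod.fst_add, Prod.snd_add]
        linear_combination (v.1 * u.2 * u'.2) * twoF4)
    (by intro c u v; rcases (by decide : ∀ c : ZMod 2, c = 0 ∨ c = 1) c with rfl | rfl <;> simp)
    (by intro u v v'; simp only [Prod.fst_add, Prod.snd_add]
        linear_combination (u.1 * v.2 * v'.2) * twoF4)
    (by intro c u v; rcases (by decide : ∀ c : ZMod 2, c = 0 ∨ c = 1) c with rfl | rfl <;> simp)

theorem B1_diag (u : V) : B1 u u = 0 := by
  show u.1 * u.1 * u.1 + u.1 * u.1 * u.1 = 0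
  linear_combination (u.1 * u.1 * u.1) * twoF4

theorem B2_diag (u : V) : B2 u u = 0 := by
  show u.2 * u.2 * u.2 + u.2 * u.2 * u.2 = 0
  linear_combination (u.2 * u.2 * u.2) * twoF4

theorem B3_diag (u : V) : B3 u u = 0 := by
  show u.1 * u.2 * u.2 + u.1 * u.2 * u.2 = 0
  linear_combination (u.1 * u.2 * u.2) * twoF4

/-- The complement map `ρ : F₄ → Λ², c ↦ x ∧ (c • y)`. -/
def rho : F4 →ₗ[ZMod 2] (⋀[ZMod 2]^2 V) where
  toFun c := w ((1:F4), (0:F4)) (c • ((0:F4), (1:F4)))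
  map_add' c c' := by
    show w ((1:F4), (0:F4)) ((c + c') • ((0:F4), (1:F4))) = _
    rw [add_smul, w_add_right]
  map_smul' a c := by
    show w ((1:F4), (0:F4)) ((a • c) • ((0:F4), (1:F4)))
        = a • w ((1:F4), (0:F4)) (c • ((0:F4), (1:F4)))
    rw [smul_assoc, w_smul_right]

open ExteriorAlgebra in
theorem all_mem (T : Submodule (ZMod 2) (⋀[ZMod 2]^2 V)) (hT : ∀ u v : V, w u v ∈ T)
    (z : ⋀[ZMod 2]^2 V) : z ∈ T := by
  have hz : (z : ExteriorAlgebra (ZMod 2) V) ∈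
      Submodule.span (ZMod 2) (Set.range (ιMulti (ZMod 2) 2 (M := V))) := by
    rw [ιMulti_span_fixedDegree]; exact z.2
  have hle : Submodule.span (ZMod 2) (Set.range (ιMulti (ZMod 2) 2 (M := V))) ≤
      T.map (⋀[ZMod 2]^2 V).subtype := by
    rw [Submodule.span_le]
    rintro _ ⟨m, rfl⟩
    have hm : m = ![m 0, m 1] := by funext i; fin_cases i <;> rfl
    refine ⟨w (m 0) (m 1), hT _ _, ?_⟩
    show ιMulti (ZMod 2) 2 ![m 0, m 1] = ιMulti (ZMod 2) 2 m
    rw [← hm]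
  obtain ⟨t, htT, ht⟩ := hle hz
  have heq : t = z := Subtype.ext ht
  exact heq ▸ htT

/-- The four distinguished elements of `Λ²V`. -/
def vM (s : F4) : Fin 4 → ⋀[ZMod 2]^2 V :=
  ![w ((1:F4), (0:F4)) (s • ((1:F4), (0:F4))),
    w ((0:F4), (1:F4)) (s • ((0:F4), (1:F4))),
    w (((1:F4), (0:F4)) + ((0:F4), (1:F4))) (s • (((1:F4), (0:F4)) + ((0:F4), (1:F4)))),
    w (((1:F4), (0:F4)) + s • ((0:F4), (1:F4)))
      (s • (((1:F4), (0:F4)) + s • ((0:F4), (1:F4))))]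

theorem s_facts (s : F4) (hs3 : s ^ 3 = 1) (hs1 : s ≠ 1) :
    s ≠ 0 ∧ s * s + s + 1 = 0 := by
  have hs0 : s ≠ 0 := by
    rintro rfl
    rw [zero_pow (by norm_num)] at hs3
    exact zero_ne_one hs3
  have hsub : s - 1 ≠ 0 := sub_ne_zero.mpr hs1
  have key : (s - 1) * (s * s + s + 1) = 0 := by linear_combination hs3
  rcases mul_eq_zero.mp key with h | h
  · exact absurd h hsub
  · exact ⟨hs0, h⟩

theorem lam_wu (s : F4) (u : V) : lam (w u (s • u)) = 0 := by
  rw [lam_w]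
  simp only [Prod.smul_fst, Prod.smul_snd, smul_eq_mul]
  ring

theorem vM_ker (s : F4) :
    Submodule.span (ZMod 2) (Set.range (vM s)) ≤ LinearMap.ker lam := by
  rw [Submodule.span_le]
  rintro _ ⟨i, rfl⟩
  rw [SetLike.mem_coe, LinearMap.mem_ker]
  fin_cases i <;> exact lam_wu s _

set_option maxHeartbeats 1000000 in
theorem mem_sup_all (s : F4) (hs3 : s ^ 3 = 1) (hs1 : s ≠ 1) (u v : V) :
    w u v ∈ Submodule.span (ZMod 2) (Set.range (vM s)) ⊔ LinearMap.range rho := by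
  obtain ⟨hs0, hsum⟩ := s_facts s hs3 hs1
  have hss : s * s = s + 1 := by linear_combination hsum - (s + 1) * twoF4
  set T := Submodule.span (ZMod 2) (Set.range (vM s)) ⊔ LinearMap.range rho with hTdef
  have hgen : ∀ i : Fin 4, vM s i ∈ T :=
    fun i => Submodule.mem_sup_left (Submodule.subset_span ⟨i, rfl⟩)
  have hrho : ∀ c : F4, w ((1:F4), (0:F4)) (c • ((0:F4), (1:F4))) ∈ T :=
    fun c => Submodule.mem_sup_right ⟨c, rfl⟩
  have h1 : w ((1:F4), (0:F4)) (s • ((1:F4), (0:F4))) ∈ T := hgen 0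
  have h2 : w ((0:F4), (1:F4)) (s • ((0:F4), (1:F4))) ∈ T := hgen 1
  have h3 : w (((1:F4), (0:F4)) + ((0:F4), (1:F4)))
      (s • (((1:F4), (0:F4)) + ((0:F4), (1:F4)))) ∈ T := hgen 2
  have h4 : w (((1:F4), (0:F4)) + s • ((0:F4), (1:F4)))
      (s • (((1:F4), (0:F4)) + s • ((0:F4), (1:F4)))) ∈ T := hgen 3
  have hC : w ((1:F4), (0:F4)) ((0:F4), (1:F4)) ∈ T := by
    have := hrho 1
    rwa [one_smul] at this
  have hD : w ((1:F4), (0:F4)) (s • ((0:F4), (1:F4))) ∈ T := hrho s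
  have hE : w ((0:F4), (1:F4)) (s • ((1:F4), (0:F4))) ∈ T := by
    have hidE : w ((0:F4), (1:F4)) (s • ((1:F4), (0:F4)))
        = w (((1:F4), (0:F4)) + ((0:F4), (1:F4)))
            (s • (((1:F4), (0:F4)) + ((0:F4), (1:F4))))
          - w ((1:F4), (0:F4)) (s • ((1:F4), (0:F4)))
          - w ((1:F4), (0:F4)) (s • ((0:F4), (1:F4)))
          - w ((0:F4), (1:F4)) (s • ((0:F4), (1:F4))) := by
      simp only [smul_add, w_add_left, w_add_right]
      abel
    rw [hidE]
    exact Submodule.sub_mem T (Submodule.sub_mem T (Submodule.sub_mem T h3 h1) hD) h2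
  have h2' : w (s • ((0:F4), (1:F4))) ((0:F4), (1:F4)) ∈ T := by
    rw [w_swap]; exact h2
  have hss2 : s • (s • ((0:F4), (1:F4))) = s • ((0:F4), (1:F4)) + ((0:F4), (1:F4)) := by
    rw [smul_smul, hss, add_smul, one_smul]
  have hF' : w (s • ((0:F4), (1:F4))) (s • ((1:F4), (0:F4))) ∈ T := by
    have hidF : w (s • ((0:F4), (1:F4))) (s • ((1:F4), (0:F4)))
        = w (((1:F4), (0:F4)) + s • ((0:F4), (1:F4)))
            (s • (((1:F4), (0:F4)) + s • ((0:F4), (1:F4))))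
          - w ((1:F4), (0:F4)) (s • ((1:F4), (0:F4)))
          - w ((1:F4), (0:F4)) (s • ((0:F4), (1:F4)))
          - w ((1:F4), (0:F4)) ((0:F4), (1:F4))
          - w (s • ((0:F4), (1:F4))) ((0:F4), (1:F4)) := by
      simp only [smul_add, hss2, w_add_left, w_add_right, w_same]
      abel
    rw [hidF]
    exact Submodule.sub_mem T (Submodule.sub_mem T (Submodule.sub_mem T
      (Submodule.sub_mem T h4 h1) hD) hC) h2'
  have hF : w (s • ((1:F4), (0:F4))) (s • ((0:F4), (1:F4))) ∈ T := by
    rw [w_swap]; exact hF'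
  obtain ⟨a1, b1, hu1⟩ := decompF4 s hs0 hs1 u.1
  obtain ⟨a2, b2, hu2⟩ := decompF4 s hs0 hs1 u.2
  obtain ⟨c1, d1, hv1⟩ := decompF4 s hs0 hs1 v.1
  obtain ⟨c2, d2, hv2⟩ := decompF4 s hs0 hs1 v.2
  have hu : u = a1 • ((1:F4), (0:F4)) + b1 • (s • ((1:F4), (0:F4)))
      + (a2 • ((0:F4), (1:F4)) + b2 • (s • ((0:F4), (1:F4)))) := by
    rw [Prod.ext_iff]
    constructor
    · simp only [Prod.smul_mk, Prod.mk_add_mk, smul_eq_mul, mul_one, mul_zero, smul_zero,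
        add_zero, zero_add]
      exact hu1
    · simp only [Prod.smul_mk, Prod.mk_add_mk, smul_eq_mul, mul_one, mul_zero, smul_zero,
        add_zero, zero_add]
      exact hu2
  have hv : v = c1 • ((1:F4), (0:F4)) + d1 • (s • ((1:F4), (0:F4)))
      + (c2 • ((0:F4), (1:F4)) + d2 • (s • ((0:F4), (1:F4)))) := by
    rw [Prod.ext_iff]
    constructor
    · simp only [Prod.smul_mk, Prod.mk_add_mk, smul_eq_mul, mul_one, mul_zero, smul_zero,
        add_zero, zero_add]
      exact hv1
    · simp only [Prod.smul_mk, Prod.mk_add_mk, smul_eq_mul, mul_one, mul_zero, smul_zero,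
        add_zero, zero_add]
      exact hv2
  rw [hu, hv]
  simp only [w_add_left, w_add_right, w_smul_left, w_smul_right, smul_add, w_same,
    smul_zero, add_zero, zero_add]
  repeat' first
    | apply Submodule.add_mem
    | apply Submodule.smul_mem
  all_goals first
    | exact h1 | exact h2 | exact hC | exact hD | exact hE | exact hF
    | (rw [w_swap]
       first
        | exact h1 | exact h2 | exact hC | exact hD | exact hE | exact hF)
    | exact Submodule.zero_mem T

theorem ker_le (s : F4) (hs3 : s ^ 3 = 1) (hs1 : s ≠ 1) :
    LinearMap.ker lam ≤ Submodule.span (ZMod 2) (Set.range (vM s)) := by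
  intro z hz
  have hmem := all_mem _ (mem_sup_all s hs3 hs1) z
  rw [Submodule.mem_sup] at hmem
  obtain ⟨a, ha, b, hb, hab⟩ := hmem
  obtain ⟨c, rfl⟩ := hb
  have hla : lam a = 0 := LinearMap.mem_ker.mp (vM_ker s ha)
  have hlrho : lam (rho c) = c := by
    show lam (w ((1:F4), (0:F4)) (c • ((0:F4), (1:F4)))) = c
    rw [lam_w]
    simp
  have hc : c = 0 := by
    have h := congrArg lam hab
    rw [map_add, hla, hlrho, zero_add] at h
    rw [h]
    exact LinearMap.mem_ker.mp hz
  rw [← hab, hc, map_zero, add_zero]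
  exact ha

set_option maxHeartbeats 1000000 in
theorem vM_indep (s : F4) (hs3 : s ^ 3 = 1) (hs1 : s ≠ 1) :
    LinearIndependent (ZMod 2) (vM s) := by
  obtain ⟨hs0, hsum⟩ := s_facts s hs3 hs1
  rw [Fintype.linearIndependent_iff]
  intro g hg
  have H1 := congrArg (fl B1 B1_diag) hg
  have H2 := congrArg (fl B2 B2_diag) hg
  have H3 := congrArg (fl B3 B3_diag) hg
  simp only [map_sum, map_add, map_smul, map_zero, vM, Fin.sum_univ_four, Matrix.cons_val_zero,
    Matrix.cons_val_one, Matrix.head_cons, Matrix.cons_val_two, Matrix.tail_cons,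
    Matrix.cons_val_three, fl_w, B1, B2, B3, LinearMap.mk₂_apply, Prod.smul_mk,
    Prod.mk_add_mk, smul_eq_mul, mul_one, mul_zero, zero_mul, one_mul, add_zero,
    zero_add, smul_zero] at H1 H2 H3
  have hA : s * s + s = 1 := by linear_combination hsum - twoF4
  have hB : s * (s * s) * (s * s) + s * s * (s * s) = 1 := by
    linear_combination (s ^ 3 - s - 1) * hsum + (s ^ 2 + s) * twoF4
  have hC : s * s * (s * s) + s * s * s = s + 1 := by
    linear_combination (s ^ 2 - 1) * hsum
  rw [hA] at H1 H2 H3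
  rw [hB] at H2
  rw [hC] at H3
  have hc : ∀ c : ZMod 2, c = 0 ∨ c = 1 := by decide
  have hg23 : g 2 = 0 ∧ g 3 = 0 := by
    rcases hc (g 2) with h2c | h2c <;> rcases hc (g 3) with h3c | h3c <;>
      rw [h2c, h3c] at H3 <;>
      simp only [zero_smul, one_smul, add_zero, zero_add] at H3
    · exact ⟨h2c, h3c⟩
    · exact absurd (by linear_combination H3 - twoF4 : s = 1) hs1
    · exact absurd H3 one_ne_zero
    · exact absurd (by linear_combination H3 - twoF4 : s = 0) hs0
  obtain ⟨hg2, hg3⟩ := hg23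
  rw [hg2, hg3] at H1 H2
  simp only [zero_smul, add_zero, zero_add] at H1 H2
  have hg0 : g 0 = 0 := by
    rcases hc (g 0) with h0c | h0c
    · exact h0c
    · rw [h0c] at H1
      simp only [one_smul] at H1
      exact absurd H1 one_ne_zero
  have hg1 : g 1 = 0 := by
    rcases hc (g 1) with h1c | h1c
    · exact h1c
    · rw [h1c] at H2
      simp only [one_smul] at H2
      exact absurd H2 one_ne_zero
  intro i
  fin_cases i
  · exact hg0
  · exact hg1
  · exact hg2
  · exact hg3

/-- The kernel `S` of `λ : Λ²_{F₂}V → F₄` is spanned over `F₂` by the elements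
`u ∧ su`, `u ∈ V`; concretely, for the basis `x, y` of `V` over `F₄`, the four
elements `x∧sx, y∧sy, (x+y)∧s(x+y), (x+sy)∧s(x+sy)` are linearly independent
over `F₂` and span `S`. -/
theorem kernel_of_wedge_spanned_by_u_wedge_su
    (s : F4) (hs3 : s ^ 3 = 1) (hs1 : s ≠ 1)
    (x y : V) (hx : x = (1, 0)) (hy : y = (0, 1)) :
    Submodule.span (ZMod 2) {z : ⋀[ZMod 2]^2 V | ∃ u : V, z = w u (s • u)}
        = LinearMap.ker lam ∧
    LinearIndependent (ZMod 2)
      ![w x (s • x), w y (s • y), w (x + y) (s • (x + y)),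
        w (x + s • y) (s • (x + s • y))] ∧
    Submodule.span (ZMod 2)
        (Set.range ![w x (s • x), w y (s • y), w (x + y) (s • (x + y)),
          w (x + s • y) (s • (x + s • y))])
      = LinearMap.ker lam := by
  subst hx
  subst hy
  have hind := vM_indep s hs3 hs1
  have hk := ker_le s hs3 hs1
  have hvk := vM_ker s
  refine ⟨?_, hind, le_antisymm hvk hk⟩
  apply le_antisymm
  · rw [Submodule.span_le]
    rintro z ⟨u, rfl⟩
    rw [SetLike.mem_coe, LinearMap.mem_ker]
    exact lam_wu s u
  · refine le_trans hk (Submodule.span_mono ?_)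
    rintro _ ⟨i, rfl⟩
    fin_cases i
    · exact ⟨((1:F4), (0:F4)), rfl⟩
    · exact ⟨((0:F4), (1:F4)), rfl⟩
    · exact ⟨(((1:F4), (0:F4)) + ((0:F4), (1:F4))), rfl⟩
    · exact ⟨(((1:F4), (0:F4)) + s • ((0:F4), (1:F4))), rfl⟩

end StatementFifteen
end

section
/- Let A = (Z/2)³, V = (Z/2)² with trivial A-action, and δw = x₁*⊗v₁ or δw = x₁*⊗v₁ + x₂*⊗v₂ a fixed element of A*⊗V (with x₁*, x₂*, x₃* a dual basis of A* and v₁, v₂ a basis of V). Then for every nonzero y ∈ A*⊗V with y ≠ δw, there exists an F₂-linear projection p : A* → Z/2 (evaluation at a suitable element of A) such that the induced image of y in (Z/2)⊗V ≅ V is nonzero and different from the image of δw. -/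
/-! The kernels of `y` and of `y - δw` are proper subgroups of `A`, and no group is the union of
two proper subgroups: if `f a ≠ 0 = g a` and `g b ≠ 0 = f b`, then `a + b` avoids both kernels. -/

theorem exists_apply_ne_zero_and_apply_ne_zero {F G H : Type*} [AddZeroClass G] [AddZeroClass H]
    [FunLike F G H] [AddMonoidHomClass F G H] {f g : F}
    (hf : ∃ a, f a ≠ 0) (hg : ∃ b, g b ≠ 0) : ∃ c, f c ≠ 0 ∧ g c ≠ 0 := by
  obtain ⟨a, hfa⟩ := hf
  obtain ⟨b, hgb⟩ := hg
  by_cases hga : g a = 0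
  · by_cases hfb : f b = 0
    · exact ⟨a + b, by simpa [map_add, hfb] using hfa, by simpa [map_add, hga] using hgb⟩
    · exact ⟨b, hfb, hgb⟩
  · exact ⟨a, hfa, hga⟩

theorem separate_from_delta_w_general
    (δw y : (Fin 3 → ZMod 2) →ₗ[ZMod 2] (Fin 2 → ZMod 2))
    (hy0 : y ≠ 0) (hyδ : y ≠ δw) :
    ∃ a : Fin 3 → ZMod 2, a ≠ 0 ∧ y a ≠ 0 ∧ y a ≠ δw a := by
  obtain ⟨a, hya, hyδa⟩ := exists_apply_ne_zero_and_apply_ne_zero (f := y) (g := y - δw)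
    (by simpa using DFunLike.ne_iff.mp hy0) (DFunLike.ne_iff.mp (sub_ne_zero.mpr hyδ))
  refine ⟨a, ?_, hya, fun h => hyδa (by simp [h])⟩
  rintro rfl
  exact hya (map_zero y)

/-- Let `A = (ℤ/2)³`, `V = (ℤ/2)²`, and `δw ∈ A* ⊗ V ≅ Hom(A, V)` equal to
`x₁* ⊗ v₁` or `x₁* ⊗ v₁ + x₂* ⊗ v₂` in suitable bases. Then every nonzero
`y ∈ Hom(A, V)` with `y ≠ δw` can be restricted (evaluated at a suitable
nonzero element of `A`, i.e. projected via some `p : A* → ℤ/2`) so that its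
image in `V` is nonzero and differs from that of `δw`. -/
theorem separate_from_delta_w
    (δw y : (Fin 3 → ZMod 2) →ₗ[ZMod 2] (Fin 2 → ZMod 2))
    (hδ : (∀ a, δw a = ![a 0, 0]) ∨ (∀ a, δw a = ![a 0, a 1]))
    (hy0 : y ≠ 0) (hyδ : y ≠ δw) :
    ∃ a : Fin 3 → ZMod 2, a ≠ 0 ∧ y a ≠ 0 ∧ y a ≠ δw a :=
  separate_from_delta_w_general δw y hy0 hyδ
end

section
/- For every finite field F_q and every n ≥ 2 such that gcd(n, q-1) > 1 and (n,q) is not one of (2,4), (2,9), (3,2), (3,4), (4,2): for each prime p dividing gcd(n, q-1), a generator of the Sylow p-subgroup of the center Z(SL(n, F_q)) is a commutator of two elements of SL(n, F_q). -/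
open Matrix Finset
open scoped Kronecker

section Helpers

variable {F : Type*} [Field F]

private lemma commutator_form {n : ℕ} (A B : Matrix (Fin n) (Fin n) F) (μ : F)
    (hA : A.det = 1) (hB : B.det = 1) (h : A * B = μ • (B * A)) :
    A * B * A⁻¹ * B⁻¹ = μ • 1 := by
  have hA' : IsUnit A.det := by rw [hA]; exact isUnit_one
  have hB' : IsUnit B.det := by rw [hB]; exact isUnit_one
  calc A * B * A⁻¹ * B⁻¹ = (μ • (B * A)) * A⁻¹ * B⁻¹ := by rw [h]
    _ = μ • (B * (A * A⁻¹) * B⁻¹) := by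
        simp only [Matrix.smul_mul, mul_assoc]
    _ = μ • 1 := by rw [Matrix.mul_nonsing_inv A hA', mul_one, Matrix.mul_nonsing_inv B hB']

private lemma pair_transport {ι : Type*} [Fintype ι] [DecidableEq ι] {n : ℕ} (e : ι ≃ Fin n)
    (μ : F) (A B : Matrix ι ι F) (hA : A.det = 1) (hB : B.det = 1)
    (hAB : A * B = μ • (B * A)) :
    ∃ A' B' : Matrix (Fin n) (Fin n) F, A'.det = 1 ∧ B'.det = 1 ∧ A' * B' = μ • (B' * A') := by
  refine ⟨Matrix.reindex e e A, Matrix.reindex e e B, ?_, ?_, ?_⟩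
  · rw [Matrix.det_reindex_self, hA]
  · rw [Matrix.det_reindex_self, hB]
  · simp only [Matrix.reindex_apply]
    rw [Matrix.submatrix_mul_equiv, hAB, Matrix.submatrix_smul, Matrix.submatrix_mul_equiv]
    rfl

private lemma pair_blocks {ι κ : Type*} [Fintype ι] [DecidableEq ι] [Fintype κ] [DecidableEq κ]
    (μ : F) (A₁ B₁ : Matrix ι ι F) (A₂ B₂ : Matrix κ κ F)
    (hA₁ : A₁.det = 1) (hB₁ : B₁.det = 1) (h₁ : A₁ * B₁ = μ • (B₁ * A₁))
    (hA₂ : A₂.det = 1) (hB₂ : B₂.det = 1) (h₂ : A₂ * B₂ = μ • (B₂ * A₂)) :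
    (Matrix.fromBlocks A₁ 0 0 A₂).det = 1 ∧ (Matrix.fromBlocks B₁ 0 0 B₂).det = 1 ∧
    (Matrix.fromBlocks A₁ 0 0 A₂) * (Matrix.fromBlocks B₁ 0 0 B₂)
      = μ • ((Matrix.fromBlocks B₁ 0 0 B₂) * (Matrix.fromBlocks A₁ 0 0 A₂)) := by
  refine ⟨?_, ?_, ?_⟩
  · rw [Matrix.det_fromBlocks_zero₂₁, hA₁, hA₂, one_mul]
  · rw [Matrix.det_fromBlocks_zero₂₁, hB₁, hB₂, one_mul]
  · rw [Matrix.fromBlocks_multiply, Matrix.fromBlocks_multiply]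
    rw [h₁, h₂, Matrix.fromBlocks_smul]
    simp

private lemma monomial_pair (M : ℕ) (μ γ : F) (hμ : μ ^ (M + 1) = 1) :
    ∃ A B : Matrix (Fin (M + 1)) (Fin (M + 1)) F,
      A.det = (-1) ^ M * γ ∧ B.det = μ ^ (∑ i ∈ range (M + 1), i) ∧
      A * B = μ • (B * A) := by
  classical
  set σ : Equiv.Perm (Fin (M + 1)) := Equiv.subRight 1 with hσ
  set g : Fin (M + 1) → F := fun j => if (j : ℕ) = M then γ else 1 with hg
  set d : Fin (M + 1) → F := fun i => μ ^ (M - (i : ℕ)) with hd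
  refine ⟨σ.permMatrix F * Matrix.diagonal g, Matrix.diagonal d, ?_, ?_, ?_⟩
  · rw [Matrix.det_mul, Matrix.det_permutation, Matrix.det_diagonal]
    have hsign : Equiv.Perm.sign σ = (-1) ^ M := by
      have : σ⁻¹ = finRotate (M + 1) := by
        ext i
        simp [hσ, finRotate_succ_apply, Equiv.subRight]
      rw [← Equiv.Perm.sign_inv, this, sign_finRotate, Nat.add_sub_cancel]
    have hprod : ∏ j : Fin (M + 1), g j = γ := by
      have : ∀ j : Fin (M + 1), g j = if j = Fin.last M then γ else 1 := by
        intro j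
        simp only [hg, Fin.ext_iff, Fin.val_last]
      simp only [this]
      simp
    rw [hsign, hprod]
    push_cast
    ring
  · rw [Matrix.det_diagonal]
    rw [Finset.prod_pow_eq_pow_sum]
    congr 1
    rw [Fin.sum_univ_eq_sum_range]
    exact Finset.sum_range_reflect id (M + 1)
  · ext i j
    rw [Matrix.mul_assoc, Matrix.diagonal_mul_diagonal]
    rw [Matrix.mul_diagonal]
    have hsmul : (μ • (Matrix.diagonal d * (σ.permMatrix F * Matrix.diagonal g))) i j
        = μ * (d i * ((σ.permMatrix F) i j * g j)) := by
      rw [Matrix.smul_apply, ← Matrix.mul_assoc, Matrix.mul_diagonal, Matrix.diagonal_mul,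
        smul_eq_mul]
      ring
    rw [hsmul]
    have hP : (σ.permMatrix F) i j = if σ i = j then 1 else 0 := by
      simp [Equiv.Perm.permMatrix, PEquiv.toMatrix_apply, Equiv.toPEquiv_apply, eq_comm]
    rw [hP]
    by_cases hij : σ i = j
    · simp only [hij, if_pos rfl]
      have hij' : i = j + 1 := by
        have : i - 1 = j := hij
        rwa [sub_eq_iff_eq_add] at this
      by_cases hj : (j : ℕ) = M
      · have hj' : j = Fin.last M := by exact Fin.ext hj
        have hi0 : i = 0 := by rw [hij', hj', Fin.last_add_one]
        simp only [hg, hd, hj, if_pos rfl, hi0, hj']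
        simp only [if_true, one_mul, Fin.val_zero, Nat.sub_zero]
        rw [← mul_assoc, ← pow_succ', hμ, one_mul]
        simp [Fin.val_last]
      · have hjM : (j : ℕ) < M := lt_of_le_of_ne (Nat.lt_succ_iff.mp j.isLt) hj
        have hiv : (i : ℕ) = (j : ℕ) + 1 := by
          rw [hij']
          exact Fin.val_add_one_of_lt (by rwa [Fin.lt_iff_val_lt_val, Fin.val_last])
        simp only [hg, hd, if_neg hj, hiv]
        have : M - (j : ℕ) = (M - ((j : ℕ) + 1)) + 1 := by omega
        rw [this, pow_succ]
        ring
    · simp [if_neg hij]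

private lemma gadget (r' : ℕ) (μ x y : F) (hμr : μ ^ (r' + 1) = -1)
    (hxy : x ^ 2 - μ * y ^ 2 = -1) :
    ∃ A B : Matrix (Fin 2 × Fin (r' + 1)) (Fin 2 × Fin (r' + 1)) F,
      A.det = 1 ∧ B.det = 1 ∧ A * B = μ • (B * A) := by
  classical
  set Rb : Matrix (Fin 2) (Fin 2) F := !![0, μ; 1, 0] with hRb
  set Mm : Matrix (Fin 2) (Fin 2) F := !![x, -(μ * y); y, -x] with hMm
  set σ : Equiv.Perm (Fin (r' + 1)) := Equiv.addRight 1 with hσ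
  set P : Matrix (Fin 2 × Fin (r' + 1)) (Fin 2 × Fin (r' + 1)) F :=
    (1 : Matrix (Fin 2) (Fin 2) F) ⊗ₖ (σ.permMatrix F) with hP
  set Dfam : Fin (r' + 1) → Matrix (Fin 2) (Fin 2) F := fun i => if i = 0 then Mm else 1
    with hDfam
  set Bfam : Fin (r' + 1) → Matrix (Fin 2) (Fin 2) F := fun i => μ ^ (i : ℕ) • Rb with hBfam
  -- conjugation lemma
  have conj : ∀ N : Fin (r' + 1) → Matrix (Fin 2) (Fin 2) F,
      P * Matrix.blockDiagonal N = Matrix.blockDiagonal (fun i => N (σ i)) * P := by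
    intro N
    ext ⟨s, i⟩ ⟨t, j⟩
    rw [Matrix.mul_apply, Matrix.mul_apply]
    rw [Fintype.sum_prod_type]
    simp only [hP, Matrix.kroneckerMap_apply, Matrix.blockDiagonal_apply,
      Matrix.one_apply, Equiv.Perm.permMatrix, PEquiv.toMatrix_apply,
      Equiv.toPEquiv_apply, Option.mem_some_iff]
    simp [Finset.sum_ite_eq, Finset.sum_ite_eq', eq_comm, mul_comm]
    rw [Fintype.sum_prod_type]
    have hcol : ∀ c : F, (∑ z : Fin (r' + 1), if j = σ z then if i = z then c else 0 else 0)
        = if j = σ i then c else 0 := by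
      intro c
      rw [Finset.sum_eq_single i]
      · simp
      · intro b _ hb
        simp [Ne.symm hb]
      · simp
    dsimp only
    refine Eq.trans ?_ (Finset.sum_congr rfl fun x _ => hcol (if t = x then N (σ i) s x else 0)).symm
    by_cases hji : j = σ i
    · simp only [hji, if_pos rfl]
      fin_cases t <;> simp
    · simp [hji]
  have hMmRb : Mm * Rb = (-1 : F) • (Rb * Mm) := by
    ext a b
    fin_cases a <;> fin_cases b <;>
      simp [hMm, hRb, Matrix.mul_apply, Fin.sum_univ_two] <;> ring
  have hsinv : ∀ z : Fin (r' + 1), σ⁻¹ z = z - 1 := by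
    intro z
    rw [Equiv.Perm.inv_eq_iff_eq]
    simp [hσ]
  refine ⟨P * Matrix.blockDiagonal Dfam, Matrix.blockDiagonal Bfam, ?_, ?_, ?_⟩
  · -- det A
    rw [Matrix.det_mul, Matrix.det_blockDiagonal]
    have hdP : P.det = 1 := by
      rw [hP, Matrix.det_kronecker, Matrix.det_one, Matrix.det_permutation, one_pow, one_mul]
      rcases Int.units_eq_one_or (Equiv.Perm.sign σ) with h | h <;>
        · rw [h]; norm_num [Fintype.card_fin]
    have hdD : ∏ i, (Dfam i).det = 1 := by
      have hh : ∀ i, (Dfam i).det = if i = 0 then Mm.det else 1 := by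
        intro i
        rw [hDfam]
        by_cases h : i = 0 <;> simp [h]
      rw [Finset.prod_congr rfl fun i _ => hh i, Finset.prod_ite_eq' Finset.univ
        (0 : Fin (r' + 1)) (fun _ => Mm.det)]
      have hd1 : Mm.det = 1 := by
        rw [hMm, Matrix.det_fin_two_of]
        linear_combination -hxy
      simp [hd1]
    rw [hdP, hdD, one_mul]
  · -- det B
    rw [Matrix.det_blockDiagonal]
    have hh : ∀ i : Fin (r' + 1), (Bfam i).det = (μ ^ (i : ℕ)) ^ 2 * (-μ) := by
      intro i
      rw [hBfam]
      simp only
      rw [Matrix.det_smul, Fintype.card_fin]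
      congr 1
      rw [hRb, Matrix.det_fin_two_of]
      ring
    rw [Finset.prod_congr rfl fun i _ => hh i, Finset.prod_mul_distrib, Finset.prod_pow,
      Finset.prod_pow_eq_pow_sum, Finset.prod_const, Finset.card_univ, Fintype.card_fin]
    have hS : (∑ i : Fin (r' + 1), (i : ℕ)) * 2 = (r' + 1) * r' := by
      rw [Fin.sum_univ_eq_sum_range (fun i => i) (r' + 1)]
      have := Finset.sum_range_id_mul_two (r' + 1)
      simpa using this
    have hexp : (μ ^ (∑ i : Fin (r' + 1), (i : ℕ))) ^ 2 = μ ^ ((r' + 1) * r') := by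
      rw [← pow_mul, hS]
    rw [hexp]
    calc μ ^ ((r' + 1) * r') * (-μ) ^ (r' + 1)
        = μ ^ ((r' + 1) * r') * ((-1 : F) ^ (r' + 1) * μ ^ (r' + 1)) := by rw [neg_pow]
      _ = (-1 : F) ^ (r' + 1) * μ ^ ((r' + 1) * r' + (r' + 1)) := by rw [pow_add]; ring
      _ = (-1 : F) ^ (r' + 1) * μ ^ ((r' + 1) * (r' + 1)) := by
          rw [show (r' + 1) * r' + (r' + 1) = (r' + 1) * (r' + 1) by ring]
      _ = (-1 : F) ^ (r' + 1) * (μ ^ (r' + 1)) ^ (r' + 1) := by rw [← pow_mul]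
      _ = (-1 : F) ^ (r' + 1) * (-1 : F) ^ (r' + 1) := by rw [hμr]
      _ = 1 := by rw [← mul_pow]; norm_num
  · -- relation
    have hABleft : P * Matrix.blockDiagonal Dfam * Matrix.blockDiagonal Bfam
        = P * Matrix.blockDiagonal (fun i => Dfam i * Bfam i) := by
      rw [Matrix.mul_assoc, Matrix.blockDiagonal_mul]
    have hN : Matrix.blockDiagonal Bfam * P
        = P * Matrix.blockDiagonal (fun i => Bfam (σ⁻¹ i)) := by
      rw [conj (fun i => Bfam (σ⁻¹ i))]
      congr 1
      funext i
      simp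
    have hBAright : μ • (Matrix.blockDiagonal Bfam * (P * Matrix.blockDiagonal Dfam))
        = P * Matrix.blockDiagonal (fun i => μ • (Bfam (σ⁻¹ i) * Dfam i)) := by
      rw [show (fun i => μ • (Bfam (σ⁻¹ i) * Dfam i))
            = μ • (fun i => Bfam (σ⁻¹ i) * Dfam i) from rfl,
        Matrix.blockDiagonal_smul, Matrix.blockDiagonal_mul, ← Matrix.mul_assoc, hN,
        Matrix.mul_assoc, Matrix.mul_smul]
    rw [hABleft, hBAright]
    refine congrArg (P * ·) (congrArg Matrix.blockDiagonal ?_)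
    funext i
    rw [hsinv i]
    by_cases hi : i = 0
    · subst hi
      have h0 : ((0 - 1 : Fin (r' + 1)) : ℕ) = r' := by
        rw [Fin.coe_sub_one, if_pos rfl]
      simp only [hDfam, hBfam, if_pos rfl, h0, Fin.val_zero, pow_zero, one_smul]
      rw [smul_mul_assoc, smul_smul, ← pow_succ', hμr, hMmRb]
    · have hne : ((i - 1 : Fin (r' + 1)) : ℕ) = (i : ℕ) - 1 := by
        rw [Fin.coe_sub_one, if_neg hi]
      simp only [hDfam, hBfam, if_neg hi, one_mul, mul_one]
      rw [hne, smul_smul, ← pow_succ']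
      congr 2
      have hvne : (i : ℕ) ≠ 0 := by
        exact Fin.val_ne_zero_iff.mpr hi
      omega

end Helpers

/-- For a finite field `F_q` and `n ≥ 2` with `gcd(n, q-1) > 1`, excluding the
exceptional pairs `(2,4), (2,9), (3,2), (3,4), (4,2)`: for each prime `p`
dividing `d = gcd(n, q-1)`, a generator of the Sylow `p`-subgroup of the center
of `SL(n, F_q)` — i.e. a scalar matrix `μ·I` with `μ` of order the full `p`-part
of `d` — is a commutator of two elements of `SL(n, F_q)`. -/
theorem center_sylow_generator_is_commutator
    (F : Type*) [Field F] [Fintype F] (n : ℕ) (hn : 2 ≤ n)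
    (hd : 1 < Nat.gcd n (Fintype.card F - 1))
    (hexc : (n, Fintype.card F) ∉
      [(2, 4), (2, 9), (3, 2), (3, 4), (4, 2)])
    (p : ℕ) (hp : p.Prime) (hpd : p ∣ Nat.gcd n (Fintype.card F - 1))
    (μ : F)
    (hμ : orderOf μ = p ^ ((Nat.gcd n (Fintype.card F - 1)).factorization p)) :
    (μ • (1 : Matrix (Fin n) (Fin n) F)).det = 1 ∧
    ∃ A B : Matrix (Fin n) (Fin n) F, A.det = 1 ∧ B.det = 1 ∧
      A * B * A⁻¹ * B⁻¹ = μ • (1 : Matrix (Fin n) (Fin n) F) := by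
  classical
  set q1 := Fintype.card F - 1 with hq1
  set d := Nat.gcd n q1 with hddef
  set k := d.factorization p with hkdef
  have hd0 : d ≠ 0 := by omega
  have hk1 : 1 ≤ k := hp.factorization_pos_of_dvd hd0 hpd
  have hedvd : p ^ k ∣ n := (Nat.ordProj_dvd d p).trans (Nat.gcd_dvd_left n q1)
  have hordn : μ ^ n = 1 := orderOf_dvd_iff_pow_eq_one.mp (hμ ▸ hedvd)
  have hgood : ∃ A B : Matrix (Fin n) (Fin n) F,
      A.det = 1 ∧ B.det = 1 ∧ A * B = μ • (B * A) := by
    by_cases hT : μ ^ (∑ i ∈ range n, i) = 1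
    · -- easy monomial case
      obtain ⟨M, rfl⟩ : ∃ M, n = M + 1 := ⟨n - 1, by omega⟩
      obtain ⟨A, B, hA, hB, hAB⟩ := monomial_pair M μ ((-1 : F) ^ M) hordn
      refine ⟨A, B, ?_, ?_, hAB⟩
      · rw [hA, ← mul_pow]; norm_num
      · rw [hB]; exact hT
    · -- hard case
      have hTmul : (∑ i ∈ range n, i) * 2 = n * (n - 1) := Finset.sum_range_id_mul_two n
      have hneven : n % 2 = 0 := by
        by_contra hodd2
        apply hT
        set c := (n - 1) / 2 with hcdef
        have hc : n - 1 = 2 * c := by omega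
        have h1 : n * (2 * c) = (n * c) * 2 := by ring
        have h2 : (∑ i ∈ range n, i) * 2 = (n * c) * 2 := by rw [hTmul, hc, h1]
        have hS : (∑ i ∈ range n, i) = n * c := by omega
        rw [hS, pow_mul, hordn, one_pow]
      obtain ⟨h, hn2⟩ : ∃ h, n = 2 * h := ⟨n / 2, by omega⟩
      have hS : (∑ i ∈ range n, i) = h * (n - 1) := by
        have h1 : (h * (n - 1)) * 2 = n * (n - 1) := by rw [hn2]; ring
        omega
      have hw2 : μ ^ h * μ ^ h = 1 := by
        rw [← pow_add, show h + h = n by omega, hordn]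
      rcases mul_self_eq_one_iff.mp hw2 with hw1 | hwm1
      · exact absurd (by rw [hS, pow_mul, hw1, one_pow]) hT
      -- now μ ^ h = -1
      have hneg1 : (-1 : F) ≠ 1 := by
        intro h1
        exact hT (by rw [hS, pow_mul, hwm1, h1, one_pow])
      have hp2 : p = 2 := by
        by_contra hpne
        have hoddp : Odd (p ^ k) := (hp.odd_of_ne_two hpne).pow
        have hcop : Nat.Coprime (p ^ k) 2 :=
          Nat.Coprime.pow_left k ((Nat.coprime_primes hp Nat.prime_two).mpr hpne)
        have hdh : p ^ k ∣ h :=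
          Nat.Coprime.dvd_of_dvd_mul_left hcop
            (show p ^ k ∣ 2 * h by rw [← hn2]; exact hedvd)
        have : μ ^ h = 1 := orderOf_dvd_iff_pow_eq_one.mp (hμ ▸ hdh)
        rw [this] at hwm1
        exact hneg1 hwm1.symm
      subst hp2
      -- gadget parameters
      have hrpos : 0 < 2 ^ (k - 1) := Nat.pow_pos (by norm_num)
      set r := 2 ^ (k - 1) with hrdef
      have hr2 : r * 2 = 2 ^ k := by
        rw [hrdef, ← pow_succ, Nat.sub_add_cancel hk1]
      have hμ2k : μ ^ (2 ^ k) = 1 := by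
        rw [← hμ]; exact pow_orderOf_eq_one μ
      have hμr : μ ^ r = -1 := by
        have h2 : μ ^ r * μ ^ r = 1 := by
          rw [← pow_add, show r + r = 2 ^ k by omega, hμ2k]
        rcases mul_self_eq_one_iff.mp h2 with h1 | h1
        · exfalso
          have : orderOf μ ∣ r := orderOf_dvd_iff_pow_eq_one.mpr h1
          rw [hμ] at this
          have := Nat.le_of_dvd hrpos this
          have hlt : 2 ^ (k - 1) < 2 ^ k := Nat.pow_lt_pow_right (by norm_num) (by omega)
          omega
        · exact h1
      have hedvdh : ¬ (2 ^ k ∣ h) := by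
        intro hdh
        have : μ ^ h = 1 := orderOf_dvd_iff_pow_eq_one.mp (hμ ▸ hdh)
        rw [this] at hwm1
        exact hneg1 hwm1.symm
      have hrh : r ∣ h := by
        have h1 : r * 2 ∣ 2 * h := by rw [hr2, ← hn2]; exact hedvd
        obtain ⟨c, hc⟩ := h1
        have h2 : r * 2 * c = (r * c) * 2 := by ring
        exact ⟨c, by omega⟩
      obtain ⟨t, ht⟩ := hrh
      have htodd : t % 2 = 1 := by
        by_contra h0
        obtain ⟨u, hu⟩ : ∃ u, t = 2 * u := ⟨t / 2, by omega⟩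
        apply hedvdh
        refine ⟨u, ?_⟩
        rw [ht, hu, ← hr2]
        ring
      -- char ≠ 2 and the quadratic solution
      have hμ0 : μ ≠ 0 := by
        intro h0
        rw [h0, zero_pow (by omega : r ≠ 0)] at hμr
        exact (neg_ne_zero.mpr (one_ne_zero (α := F))) hμr.symm
      have hchar : ringChar F ≠ 2 := by
        intro h2
        haveI : CharP F 2 := h2 ▸ ringChar.charP F
        exact hneg1 (CharTwo.neg_eq 1)
      obtain ⟨a, b, hab⟩ := FiniteField.exists_root_sum_quadratic
        (f := Polynomial.X ^ 2 + Polynomial.C 1) (g := Polynomial.C (-μ) * Polynomial.X ^ 2)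
        (Polynomial.degree_X_pow_add_C (by norm_num) 1)
        (by rw [Polynomial.degree_C_mul_X_pow _ (neg_ne_zero.mpr hμ0)]; norm_cast)
        (FiniteField.odd_card_of_char_ne_two hchar)
      have hxy : a ^ 2 - μ * b ^ 2 = -1 := by
        simp only [Polynomial.eval_add, Polynomial.eval_pow, Polynomial.eval_X,
          Polynomial.eval_C, Polynomial.eval_mul, Polynomial.eval_one] at hab
        linear_combination hab
      obtain ⟨r1, hr1⟩ : ∃ r1, r = r1 + 1 := ⟨r - 1, by omega⟩
      obtain ⟨A₁, B₁, hA₁, hB₁, hAB₁⟩ := gadget r1 μ a b (by rw [← hr1]; exact hμr) hxy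
      have hmn : 2 ^ k ≤ n := Nat.le_of_dvd (by omega) hedvd
      rcases Nat.eq_zero_or_pos (n - 2 ^ k) with hs0 | hspos
      · -- n = 2^k : gadget only
        have hn2k : n = (r1 + 1) * 2 := by omega
        exact pair_transport
          ((Equiv.prodComm (Fin 2) (Fin (r1 + 1))).trans
            (finProdFinEquiv.trans (finCongr hn2k.symm)))
          μ A₁ B₁ hA₁ hB₁ hAB₁
      · -- n > 2^k : gadget ⊕ monomial
        obtain ⟨S, hSs⟩ : ∃ S, n - 2 ^ k = S + 1 := ⟨n - 2 ^ k - 1, by omega⟩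
        -- second block data
        have hes : 2 ^ k ∣ n - 2 ^ k := Nat.dvd_sub hedvd dvd_rfl
        have hordS : μ ^ (S + 1) = 1 := by
          rw [← hSs]
          exact orderOf_dvd_iff_pow_eq_one.mp (hμ ▸ hes)
        -- μ ^ T(s) = 1
        have hTs : μ ^ (∑ i ∈ range (S + 1), i) = 1 := by
          set s := S + 1 with hsdef
          have hs2 : s = 2 * (h - r) := by omega
          have hh' : μ ^ (h - r) = 1 := by
            obtain ⟨t0, rfl⟩ : ∃ t0, t = t0 + 1 := ⟨t - 1, by omega⟩
            obtain ⟨u, hu⟩ : ∃ u, t0 = 2 * u := ⟨t0 / 2, by omega⟩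
            have hru : h - r = 2 ^ k * u := by
              have e1 : r * (t0 + 1) = r * t0 + r := by ring
              have e2 : r * t0 = r * (2 * u) := by rw [hu]
              have e3 : r * (2 * u) = r * 2 * u := by ring
              rw [hr2] at e3
              omega
            rw [hru, pow_mul, hμ2k, one_pow]
          have hTmuls : (∑ i ∈ range s, i) * 2 = s * (s - 1) := Finset.sum_range_id_mul_two s
          have h1 : ((h - r) * (s - 1)) * 2 = s * (s - 1) := by rw [hs2]; ring
          have hSsum : (∑ i ∈ range s, i) = (h - r) * (s - 1) := by omega
          rw [hSsum, pow_mul, hh', one_pow]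
        obtain ⟨A₂, B₂, hA₂, hB₂, hAB₂⟩ := monomial_pair S μ ((-1 : F) ^ S) hordS
        have hA₂' : A₂.det = 1 := by rw [hA₂, ← mul_pow]; norm_num
        have hB₂' : B₂.det = 1 := by rw [hB₂]; exact hTs
        obtain ⟨hdA, hdB, hrel⟩ := pair_blocks μ A₁ B₁ A₂ B₂ hA₁ hB₁ hAB₁ hA₂' hB₂' hAB₂
        have hsum : (r1 + 1) * 2 + (S + 1) = n := by omega
        exact pair_transport
          ((Equiv.sumCongr ((Equiv.prodComm (Fin 2) (Fin (r1 + 1))).trans finProdFinEquiv)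
              (Equiv.refl (Fin (S + 1)))).trans
            (finSumFinEquiv.trans (finCongr hsum)))
          μ _ _ hdA hdB hrel
  obtain ⟨A, B, hA, hB, hAB⟩ := hgood
  refine ⟨?_, A, B, hA, hB, commutator_form A B μ hA hB hAB⟩
  rw [Matrix.det_smul, Matrix.det_one, Fintype.card_fin, hordn, mul_one]
end
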